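/- Let p be a prime and let d be a prime number dividing p − 1 with d < p − 1. Let Z_d = {z ∈ 𝔽_p : z^d = 1}. If A, B ⊆ 𝔽_p are finite sets with A + B = Z_d, then A or B is a singleton (i.e., |A| = 1 or |B| = 1). -/

import Mathlib

/-!
Stepanov's method, as in Hanson–Petridis. Let `|A| = k + 1` and `A + B ⊆ μ_d`. Pick weights `c`
on `A` whose power sums `∑ c_a a^j` vanish for `j < k` but not for `j = k` (Vandermonde), and put
`Q = ∑ c_a (X + a)^(d + k) - s` with `s = ∑ c_a a^k`. The vanishing power sums kill every
coefficient above `X^d`, while `binom(d + k, d) ≠ 0` keeps `Q ≠ 0`. At `b ∈ B`, the `j`-th Taylor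
coefficient of `Q` involves `(a + b)^(d + k - j) = (a + b)^(k - j)`, and the power sums of `A + b`
of order `≤ k` equal those of `A`; so every `b ∈ B` is a root of multiplicity `≥ k + 1`, whence
`|A| |B| ≤ d`. When `d ∣ p - 1` properly, `2d ≤ p - 1` makes the binomial coefficient a unit mod
`p`, and `|A + B| = d` gives the reverse inequality; `|A| |B| = d` with `d` prime forces a
singleton.
-/

open Finset Polynomial
open scoped Pointwise

section PowerSums

variable {ι : Type*} [Fintype ι]

theorem sum_mul_add_pow_eq_of_forall_lt {R : Type*} [CommRing R] (c v : ι → R) {k : ℕ}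
    (hc : ∀ j < k, ∑ i, c i * v i ^ j = 0) (x : R) {r : ℕ} (hr : r ≤ k) :
    ∑ i, c i * (v i + x) ^ r = ∑ i, c i * v i ^ r := by
  have expand : ∑ i, c i * (v i + x) ^ r
      = ∑ t ∈ range (r + 1), (∑ i, c i * v i ^ t) * (x ^ (r - t) * r.choose t) := by
    simp_rw [add_pow, mul_sum]
    rw [sum_comm]
    refine sum_congr rfl fun t _ => ?_
    rw [sum_mul]
    exact sum_congr rfl fun i _ => by ring
  rw [expand, sum_eq_single_of_mem r (self_mem_range_succ r)]
  · simp
  · intro t ht htr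
    rw [hc t (by grind), zero_mul]

theorem eq_zero_of_forall_sum_mul_pow_eq_zero {R : Type*} [CommRing R] [IsDomain R]
    {c v : ι → R} (hv : Function.Injective v)
    (h : ∀ j < Fintype.card ι, ∑ i, c i * v i ^ j = 0) : c = 0 := by
  let e := Fintype.equivFin ι
  have hce : c ∘ e.symm = 0 :=
    Matrix.eq_zero_of_forall_pow_sum_mul_pow_eq_zero (hv.comp e.symm.injective) fun j => by
      simpa only [Function.comp_apply, e.symm.sum_comp fun i => c i * v i ^ (j : ℕ)] using h j j.2
  funext i
  simpa using congrFun hce (e i)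

theorem exists_ne_zero_forall_sum_mul_pow_eq_zero {K : Type*} [Field K] (v : ι → K) {k : ℕ}
    (hk : k < Fintype.card ι) : ∃ c : ι → K, c ≠ 0 ∧ ∀ j < k, ∑ i, c i * v i ^ j = 0 := by
  let M : Matrix ι (Fin k) K := Matrix.of fun i j => v i ^ (j : ℕ)
  obtain ⟨c, hcM, hc0⟩ := (Submodule.ne_bot_iff _).mp <|
    M.vecMulLinear.ker_ne_bot_of_finrank_lt (by simpa using hk)
  exact ⟨c, hc0, fun j hj => congrFun hcM ⟨j, hj⟩⟩

end PowerSums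

section StepanovPolynomial

variable {R : Type*} [CommRing R] {ι : Type*} [Fintype ι]

theorem coeff_sum_C_mul_X_add_C_pow (c w : ι → R) (N j : ℕ) :
    (∑ i, C (c i) * (X + C (w i)) ^ N).coeff j = N.choose j * ∑ i, c i * w i ^ (N - j) := by
  simp only [finsetSum_coeff, coeff_C_mul, coeff_X_add_C_pow, mul_sum]
  exact sum_congr rfl fun i _ => by ring

theorem taylor_sum_C_mul_X_add_C_pow (c w : ι → R) (N : ℕ) (b : R) :
    taylor b (∑ i, C (c i) * (X + C (w i)) ^ N) = ∑ i, C (c i) * (X + C (w i + b)) ^ N := by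
  simp only [map_sum, taylor_mul, taylor_C, taylor_pow, map_add, taylor_X]
  exact sum_congr rfl fun i _ => by ring

theorem mul_card_le_natDegree_of_le_rootMultiplicity [IsDomain R] {p : R[X]} {s : Finset R}
    {m : ℕ} (h : ∀ x ∈ s, m ≤ p.rootMultiplicity x) : m * #s ≤ p.natDegree := by
  classical
  have hle : m • s.val ≤ p.roots := Multiset.le_iff_count.mpr fun x => by
    rw [Multiset.count_nsmul, count_roots]
    by_cases hx : x ∈ s
    · simpa [Multiset.count_eq_one_of_mem s.nodup hx] using h x hx
    · simp [Multiset.count_eq_zero_of_notMem hx]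
  calc m * #s = Multiset.card (m • s.val) := by simp
    _ ≤ Multiset.card p.roots := Multiset.card_le_card hle
    _ ≤ p.natDegree := card_roots' p

end StepanovPolynomial

theorem card_mul_card_le_of_forall_add_pow_eq_one {K : Type*} [Field K] {A B : Finset K}
    {d k : ℕ} (hd : d ≠ 0) (hA : #A = k + 1) (hchoose : ((d + k).choose d : K) ≠ 0)
    (hroot : ∀ a ∈ A, ∀ b ∈ B, (a + b) ^ d = 1) : #A * #B ≤ d := by
  let v : A → K := (↑)
  obtain ⟨c, hc0, hc⟩ := exists_ne_zero_forall_sum_mul_pow_eq_zero v (k := k) (by simp [hA])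
  set s := ∑ a, c a * v a ^ k
  have hs : s ≠ 0 := fun hs0 => hc0 <| eq_zero_of_forall_sum_mul_pow_eq_zero Subtype.val_injective
    fun j hj => by
      obtain hj | rfl : j < k ∨ j = k := by simp [hA] at hj; omega
      exacts [hc j hj, hs0]
  set Q : K[X] := ∑ a, C (c a) * (X + C (v a)) ^ (d + k) - C s
  have hQ0 : Q ≠ 0 := by
    intro hQ
    have hQd := congrArg (coeff · d) hQ
    simp only [Q, coeff_sub, coeff_sum_C_mul_X_add_C_pow, coeff_C, if_neg hd, add_tsub_cancel_left,
      sub_zero, coeff_zero] at hQd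
    exact mul_ne_zero hchoose hs hQd
  have hdeg : Q.natDegree ≤ d := by
    refine natDegree_le_iff_coeff_eq_zero.mpr fun j hj => ?_
    rw [coeff_sub, coeff_sum_C_mul_X_add_C_pow, coeff_C, if_neg (by omega), sub_zero]
    rcases lt_or_ge (d + k) j with hjN | hjN
    · rw [Nat.choose_eq_zero_of_lt hjN, Nat.cast_zero, zero_mul]
    · rw [hc _ (by omega), mul_zero]
  have hmult : ∀ b ∈ B, k + 1 ≤ Q.rootMultiplicity b := by
    intro b hb
    rw [rootMultiplicity_eq_natTrailingDegree, ← taylor_apply]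
    refine le_natTrailingDegree ((taylor_eq_zero b Q).not.mpr hQ0) fun j hj => ?_
    have hpow : ∀ a, (v a + b) ^ (d + k - j) = (v a + b) ^ (k - j) := fun a => by
      rw [show d + k - j = d + (k - j) by omega, pow_add, hroot a a.2 b hb, one_mul]
    simp only [Q, map_sub, taylor_C, taylor_sum_C_mul_X_add_C_pow, coeff_sub,
      coeff_sum_C_mul_X_add_C_pow, coeff_C, hpow, sum_mul_add_pow_eq_of_forall_lt c v hc b (k.sub_le j)]
    rcases eq_or_ne j 0 with rfl | hj0
    · simp [s]
    · rw [if_neg hj0, hc _ (by omega), mul_zero, sub_zero]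
  calc #A * #B = (k + 1) * #B := by rw [hA]
    _ ≤ Q.natDegree := mul_card_le_natDegree_of_le_rootMultiplicity hmult
    _ ≤ d := hdeg

theorem ZMod.card_nthRootsFinset_one {p : ℕ} [Fact p.Prime] {d : ℕ} (hd : d ∣ p - 1) :
    #(nthRootsFinset d (1 : ZMod p)) = d := by
  have : NeZero (p - 1) := ⟨(Nat.sub_pos_of_lt (Fact.out : p.Prime).one_lt).ne'⟩
  have := HasEnoughRootsOfUnity.of_dvd (ZMod p) hd
  obtain ⟨ζ, hζ⟩ := HasEnoughRootsOfUnity.exists_primitiveRoot (ZMod p) d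
  exact hζ.card_nthRootsFinset

theorem no_sumset_decomposition_prime_d
    (p : ℕ) (hp : p.Prime) (d : ℕ) (hdprime : d.Prime)
    (hdvd : d ∣ p - 1) (hlt : d < p - 1)
    (A B : Finset (ZMod p))
    (h : (↑(A + B) : Set (ZMod p)) = {z : ZMod p | z ^ d = 1}) :
    A.card = 1 ∨ B.card = 1 := by
  have := Fact.mk hp
  have hsum : A + B = nthRootsFinset d (1 : ZMod p) :=
    coe_injective <| h.trans <| by ext; simp [mem_nthRootsFinset hdprime.pos]
  have hcard : #(A + B) = d := hsum ▸ ZMod.card_nthRootsFinset_one hdvd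
  have hroot : ∀ a ∈ A, ∀ b ∈ B, (a + b) ^ d = 1 := fun a ha b hb =>
    (h ▸ mem_coe.mpr (add_mem_add ha hb) : a + b ∈ {z : ZMod p | z ^ d = 1})
  obtain ⟨hA, hB⟩ := add_nonempty.mp (card_pos.mp (hcard ▸ hdprime.pos))
  obtain ⟨k, hk⟩ := Nat.exists_eq_succ_of_ne_zero (card_pos.mpr hA).ne'
  have hAd : #A ≤ d := hcard ▸ card_le_card_add_right hB
  have hdkp : d + k < p := by
    obtain ⟨t, ht⟩ := hdvd
    have ht2 : 2 ≤ t := by by_contra!; interval_cases t <;> omega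
    have : 2 * d ≤ p - 1 := ht ▸ by nlinarith
    omega
  have hchoose : ((d + k).choose d : ZMod p) ≠ 0 := by
    rw [Ne, ZMod.natCast_eq_zero_iff, ← hp.coprime_iff_not_dvd]
    exact hp.coprime_choose_of_lt hdkp (by omega)
  have hAB : #A * #B = d := le_antisymm
    (card_mul_card_le_of_forall_add_pow_eq_one hdprime.ne_zero hk hchoose hroot)
    (hcard ▸ card_add_le)
  rcases Nat.prime_mul_iff.mp (hAB ▸ hdprime) with ⟨-, hB1⟩ | ⟨-, hA1⟩
  exacts [Or.inr hB1, Or.inl hA1]
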